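/- arXiv:math/0411439 — 4 statements merged into one kernel-verified Lean document; each statement's English description precedes it below -/
import Mathlib

section
/- Let V be a finite-dimensional irreducible module over sl(2,ℂ) whose dimension is either equal to 2 or odd. Then the sl(2,ℂ)-module V ⊗ sl(2,ℂ) is generated by its sl(2,ℂ)-overshears, i.e., the smallest Lie submodule of V ⊗ sl(2,ℂ) containing all sl(2,ℂ)-overshears equals V ⊗ sl(2,ℂ). -/
/-!
Let `m` be a primitive vector of weight `n` and `ψ i = fⁱ m`, so that `ψ 0, …, ψ n` is a basis of
`V` and `dim V = n + 1`. The vectors `m ⊗ e` and `ψ 1 ⊗ e` are always overshears, and so is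
`ψ k ⊗ h` when `n = 2k`. In that case `X₀ = f^(k+1) · (m ⊗ e)` and `X₁ = f^k · (ψ 1 ⊗ e)` lie in
the zero weight space of `V ⊗ 𝔤`, spanned by `ψ (k+1) ⊗ e`, `ψ k ⊗ h`, `ψ (k-1) ⊗ f`, and together
with `ψ k ⊗ h` they span it; one more application of `e` resp. `f` gives `ψ k ⊗ x` for all `x`.
For `n = 1` the same kind of computation, starting from `m ⊗ e` and `ψ 1 ⊗ e`, gives `m ⊗ x`.
Finally, the `v` with `v ⊗ 𝔤` inside a Lie submodule form a Lie submodule of the irreducible `V`,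
so one nonzero such `v` forces the submodule to be everything.
-/

open TensorProduct LieModule

section Generation

variable {R L M N : Type*} [CommRing R] [LieRing L] [LieAlgebra R L]
  [AddCommGroup M] [Module R M] [LieRingModule L M] [LieModule R L M]
  [AddCommGroup N] [Module R N] [LieRingModule L N] [LieModule R L N]

lemma tmul_mem_of_span_eq_top {s : Set N} (hs : Submodule.span R s = ⊤)
    (P : Submodule R (M ⊗[R] N)) {m : M} (hm : ∀ n ∈ s, m ⊗ₜ[R] n ∈ P) (n : N) :
    m ⊗ₜ[R] n ∈ P := by
  have : Submodule.span R s ≤ P.comap (TensorProduct.mk R M N m) := Submodule.span_le.2 hm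
  exact this (hs ▸ Submodule.mem_top)

lemma lie_mem_of_span_eq_top {s : Set L} (hs : Submodule.span R s = ⊤)
    (P : Submodule R M) (hP : ∀ x ∈ s, ∀ m ∈ P, ⁅x, m⁆ ∈ P) (x : L) {m : M} (hm : m ∈ P) :
    ⁅x, m⁆ ∈ P := by
  have : Submodule.span R s ≤ P.comap ((toEnd R L M : L →ₗ[R] Module.End R M).flip m) :=
    Submodule.span_le.2 fun y hy ↦ hP y hy m hm
  exact this (hs ▸ Submodule.mem_top)

lemma LieSubmodule.pow_toEnd_apply_mem (P : LieSubmodule R L M) (x : L) (k : ℕ) {m : M}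
    (hm : m ∈ P) : (toEnd R L M x ^ k) m ∈ P := by
  rw [Module.End.coe_pow]
  exact Set.MapsTo.iterate (fun _ hm ↦ P.lie_mem hm) k hm

/-- The analogue of the colon ideal `(P : N)`. -/
def LieSubmodule.tmulColon (P : LieSubmodule R L (M ⊗[R] N)) : LieSubmodule R L M where
  carrier := {m | ∀ n : N, m ⊗ₜ[R] n ∈ P}
  add_mem' ha hb n := by rw [add_tmul]; exact P.add_mem (ha n) (hb n)
  zero_mem' n := by rw [zero_tmul]; exact P.zero_mem
  smul_mem' c m hm n := by rw [← smul_tmul']; exact P.smul_mem c (hm n)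
  lie_mem {x m} hm n := by
    have : ⁅x, m⁆ ⊗ₜ[R] n = ⁅x, m ⊗ₜ[R] n⁆ - m ⊗ₜ[R] ⁅x, n⁆ := by
      rw [TensorProduct.LieModule.lie_tmul_right]; abel
    rw [this]
    exact P.sub_mem (P.lie_mem (hm n)) (hm _)

lemma LieSubmodule.eq_top_of_tmul_mem [IsIrreducible R L M] (P : LieSubmodule R L (M ⊗[R] N))
    {m : M} (hm₀ : m ≠ 0) (hm : ∀ n : N, m ⊗ₜ[R] n ∈ P) : P = ⊤ := by
  have hP : P.tmulColon = ⊤ :=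
    (eq_bot_or_eq_top _).resolve_left fun h ↦ hm₀ <| by
      simpa [h] using (show m ∈ P.tmulColon from hm)
  rw [eq_top_iff]
  rintro z -
  induction z using TensorProduct.induction_on with
  | zero => exact P.zero_mem
  | tmul a n => exact (show a ∈ P.tmulColon from hP ▸ mem_top a) n
  | add a c ha hc => exact P.add_mem ha hc

end Generation

section Overshears

variable {R L M : Type*} [CommRing R] [LieRing L] [LieAlgebra R L]
  [AddCommGroup M] [Module R M] [LieRingModule L M] [LieModule R L M]

variable (R L M) in
def overshears : Set (M ⊗[R] L) := {z | ∃ (v : M) (x : L), z = v ⊗ₜ[R] x ∧ ⁅x, ⁅x, v⁆⁆ = 0}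

lemma lie_tmul_self (x : L) (u : M) : ⁅x, u ⊗ₜ[R] x⁆ = ⁅x, u⁆ ⊗ₜ x := by
  rw [TensorProduct.LieModule.lie_tmul_right, lie_self, tmul_zero, add_zero]

namespace IsSl2Triple

variable {h e f : L} (t : IsSl2Triple h e f)
include t

lemma lie_f_tmul_e (u : M) : ⁅f, u ⊗ₜ[R] e⁆ = ⁅f, u⁆ ⊗ₜ e - u ⊗ₜ h := by
  rw [TensorProduct.LieModule.lie_tmul_right, ← lie_skew, t.lie_e_f, tmul_neg, sub_eq_add_neg]

lemma lie_f_tmul_h (u : M) : ⁅f, u ⊗ₜ[R] h⁆ = ⁅f, u⁆ ⊗ₜ h + (2 : R) • u ⊗ₜ f := by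
  rw [TensorProduct.LieModule.lie_tmul_right, ← lie_skew, t.lie_lie_smul_f R, neg_neg, tmul_smul]

-- At `j = 0` the last coefficient vanishes, so the truncated `j - 1` is harmless.
lemma pow_toEnd_f_tmul_e (u : M) (j : ℕ) :
    (toEnd R L (M ⊗[R] L) f ^ (j + 1)) (u ⊗ₜ e) =
      (toEnd R L M f ^ (j + 1)) u ⊗ₜ e - ((j : R) + 1) • (toEnd R L M f ^ j) u ⊗ₜ h
        - (((j : R) + 1) * j) • (toEnd R L M f ^ (j - 1)) u ⊗ₜ f := by
  have lie_f_pow (k : ℕ) : ⁅f, (toEnd R L M f ^ k) u⁆ = (toEnd R L M f ^ (k + 1)) u := by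
    rw [pow_succ', Module.End.mul_apply, toEnd_apply_apply]
  induction j with
  | zero => simp [t.lie_f_tmul_e]
  | succ j ih =>
    rw [pow_succ', Module.End.mul_apply, ih, toEnd_apply_apply]
    simp only [lie_sub, lie_smul, t.lie_f_tmul_e, t.lie_f_tmul_h, lie_tmul_self, lie_f_pow]
    rcases j with _ | j
    · simp only [zero_add, Nat.cast_zero, mul_zero, zero_smul, sub_zero, Nat.cast_one]
      module
    · simp only [Nat.add_sub_cancel]
      push_cast
      module

end IsSl2Triple

end Overshears

namespace IsSl2Triple.HasPrimitiveVectorWith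

variable {K L M : Type*} [Field K] [LieRing L] [LieAlgebra K L]
  [AddCommGroup M] [Module K M] [LieRingModule L M] [LieModule K L M]
  {h e f : L} {t : IsSl2Triple h e f} {m : M} {n : ℕ}

local notation "ψ " i => ((toEnd K L M f) ^ i) m

section Overshears

variable {Q : LieSubmodule K L (M ⊗[K] L)} (hQ : overshears K L M ⊆ Q)
include hQ

lemma tmul_e_mem {μ : K} (P : t.HasPrimitiveVectorWith m μ) : m ⊗ₜ[K] e ∈ Q :=
  hQ ⟨_, _, rfl, by simp [P.lie_e]⟩

lemma lie_f_tmul_e_mem {μ : K} (P : t.HasPrimitiveVectorWith m μ) :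
    ⁅f, m⁆ ⊗ₜ[K] e ∈ Q :=
  hQ ⟨_, _, rfl, by simpa [P.lie_e] using congr_arg (⁅e, ·⁆) (P.lie_e_pow_succ_toEnd_f 0)⟩

lemma pow_toEnd_f_tmul_h_mem (P : t.HasPrimitiveVectorWith m (n : K)) {k : ℕ} (hn : n = 2 * k) :
    (ψ k) ⊗ₜ[K] h ∈ Q :=
  hQ ⟨_, _, rfl, by rw [P.lie_h_pow_toEnd_f, hn]; push_cast; simp⟩

variable [CharZero K]

lemma pow_toEnd_f_tmul_f_mem_and_tmul_e_mem (P : t.HasPrimitiveVectorWith m (n : K)) {j : ℕ}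
    (hn : n = 2 * (j + 1)) : (ψ j) ⊗ₜ[K] f ∈ Q ∧ (ψ (j + 2)) ⊗ₜ[K] e ∈ Q := by
  have hh := P.pow_toEnd_f_tmul_h_mem hQ hn
  have X₀ : (ψ (j + 2)) ⊗ₜ[K] e - ((j : K) + 2) • (ψ (j + 1)) ⊗ₜ[K] h
      - (((j : K) + 2) * (j + 1)) • (ψ j) ⊗ₜ[K] f ∈ Q := by
    have := Q.pow_toEnd_apply_mem f (j + 2) (P.tmul_e_mem hQ)
    rw [t.pow_toEnd_f_tmul_e] at this
    simpa [add_assoc, one_add_one_eq_two] using this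
  have X₁ : (ψ (j + 2)) ⊗ₜ[K] e - ((j : K) + 1) • (ψ (j + 1)) ⊗ₜ[K] h
      - (((j : K) + 1) * j) • (ψ j) ⊗ₜ[K] f ∈ Q := by
    have shift (a : ℕ) : (toEnd K L M f ^ a) ⁅f, m⁆ = ψ (a + 1) := by
      rw [pow_succ, Module.End.mul_apply, toEnd_apply_apply]
    have := Q.pow_toEnd_apply_mem f (j + 1) (P.lie_f_tmul_e_mem hQ)
    simp only [t.pow_toEnd_f_tmul_e, shift] at this
    rcases j with _ | j <;> simpa using this
  have hf : (ψ j) ⊗ₜ[K] f ∈ Q := by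
    have hc : -(2 * ((j : K) + 1)) ≠ 0 :=
      neg_ne_zero.2 (mul_ne_zero two_ne_zero (Nat.cast_add_one_ne_zero j))
    refine (Q.toSubmodule.smul_mem_iff hc).1 ?_
    convert Q.add_mem (Q.sub_mem X₀ X₁) hh using 1
    module
  refine ⟨hf, ?_⟩
  show _ ∈ (Q : Submodule K (M ⊗[K] L))
  convert Q.add_mem (Q.add_mem X₀ (Q.smul_mem ((j : K) + 2) hh))
    (Q.smul_mem (((j : K) + 2) * (j + 1)) hf) using 1
  module

lemma tmul_mem_of_eq_two_mul_succ (P : t.HasPrimitiveVectorWith m (n : K)) {j : ℕ}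
    (hn : n = 2 * (j + 1)) : ∀ x ∈ ({e, f, h} : Set L), (ψ (j + 1)) ⊗ₜ[K] x ∈ Q := by
  obtain ⟨hf, he⟩ := P.pow_toEnd_f_tmul_f_mem_and_tmul_e_mem hQ hn
  have he' : (ψ (j + 1)) ⊗ₜ[K] e ∈ Q := by
    have : _ ∈ Q := Q.lie_mem (x := e) he
    rw [lie_tmul_self, P.lie_e_pow_succ_toEnd_f, ← smul_tmul', hn] at this
    refine (Q.toSubmodule.smul_mem_iff ?_).1 this
    convert (Nat.cast_ne_zero.2 (by positivity) : (((j + 2) * (j + 1) : ℕ) : K) ≠ 0) using 1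
    push_cast
    ring
  have hf' : (ψ (j + 1)) ⊗ₜ[K] f ∈ Q := by
    have := Q.lie_mem (x := f) hf
    rwa [lie_tmul_self, P.lie_f_pow_toEnd_f] at this
  rintro x (rfl | rfl | rfl)
  exacts [he', hf', P.pow_toEnd_f_tmul_h_mem hQ hn]

variable [FiniteDimensional K M]

lemma tmul_mem_of_eq_zero (P : t.HasPrimitiveVectorWith m (n : K)) (hn : n = 0) :
    ∀ x ∈ ({e, f, h} : Set L), m ⊗ₜ[K] x ∈ Q := by
  have hf : ⁅f, m⁆ = 0 := by simpa [hn] using P.pow_toEnd_f_eq_zero_of_eq_nat rfl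
  rintro x (rfl | rfl | rfl)
  exacts [P.tmul_e_mem hQ, hQ ⟨_, _, rfl, by simp [hf]⟩,
    by simpa using P.pow_toEnd_f_tmul_h_mem hQ (k := 0) hn]

lemma tmul_mem_of_eq_one (P : t.HasPrimitiveVectorWith m (n : K)) (hn : n = 1) :
    ∀ x ∈ ({e, f, h} : Set L), m ⊗ₜ[K] x ∈ Q := by
  have hff : ⁅f, ⁅f, m⁆⁆ = 0 := by
    simpa [hn, pow_succ] using P.pow_toEnd_f_eq_zero_of_eq_nat rfl
  have he₀ := P.tmul_e_mem hQ
  have he₁ := P.lie_f_tmul_e_mem hQ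
  have hh₀ : m ⊗ₜ[K] h ∈ Q := by
    have : _ ∈ Q := Q.sub_mem he₁ (Q.lie_mem (x := f) he₀)
    rwa [t.lie_f_tmul_e, sub_sub_cancel] at this
  have hh₁ : ⁅f, m⁆ ⊗ₜ[K] h ∈ Q := by
    have : _ ∈ Q := Q.lie_mem (x := f) he₁
    rwa [t.lie_f_tmul_e, hff, zero_tmul, zero_sub, neg_mem_iff] at this
  have hf₀ : m ⊗ₜ[K] f ∈ Q := by
    have : _ ∈ Q := Q.lie_mem (x := f) hh₀
    rw [t.lie_f_tmul_h, add_mem_cancel_left hh₁] at this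
    exact (Q.toSubmodule.smul_mem_iff two_ne_zero).1 this
  rintro x (rfl | rfl | rfl)
  exacts [he₀, hf₀, hh₀]

end Overshears

variable [CharZero K]

lemma linearIndependent_pow_toEnd_f (P : t.HasPrimitiveVectorWith m (n : K)) :
    LinearIndependent K fun i : Fin (n + 1) ↦ ψ (i : ℕ) := by
  refine (toEnd K L M h).eigenvectors_linearIndependent' (fun i : Fin (n + 1) ↦ (n - 2 * i : K))
    (fun i j hij ↦ Fin.ext <| by simpa using hij) _ fun i ↦ ⟨?_, ?_⟩
  · rw [Module.End.mem_eigenspace_iff, toEnd_apply_apply, P.lie_h_pow_toEnd_f]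
  · exact P.pow_toEnd_f_ne_zero_of_eq_nat rfl (Nat.lt_succ_iff.mp i.isLt)

variable [FiniteDimensional K M]

lemma lie_mem_span_pow_toEnd_f (P : t.HasPrimitiveVectorWith m (n : K))
    (hspan : Submodule.span K {e, f, h} = ⊤) (x : L) {v : M}
    (hv : v ∈ Submodule.span K (Set.range fun i : Fin (n + 1) ↦ ψ (i : ℕ))) :
    ⁅x, v⁆ ∈ Submodule.span K (Set.range fun i : Fin (n + 1) ↦ ψ (i : ℕ)) := by
  set S := Submodule.span K (Set.range fun i : Fin (n + 1) ↦ ψ (i : ℕ))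
  have mem {i : ℕ} (hi : i ≤ n) : (ψ i) ∈ S := Submodule.subset_span ⟨⟨i, by omega⟩, rfl⟩
  refine lie_mem_of_span_eq_top hspan S ?_ x hv
  intro y hy w hw
  induction hw using Submodule.span_induction with
  | zero => simp
  | add a c _ _ ha hc => rw [lie_add]; exact S.add_mem ha hc
  | smul c a _ ha => rw [lie_smul]; exact S.smul_mem c ha
  | mem w hw =>
    obtain ⟨⟨i, hi⟩, rfl⟩ := hw
    dsimp only
    rcases hy with rfl | rfl | rfl
    · rcases i with _ | i
      · simp [P.lie_e]
      · rw [P.lie_e_pow_succ_toEnd_f]; exact S.smul_mem _ (mem (by omega))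
    · rw [P.lie_f_pow_toEnd_f]
      rcases Nat.lt_or_ge i n with hin | hin
      · exact mem hin
      · rw [show i = n by omega, P.pow_toEnd_f_eq_zero_of_eq_nat rfl]; exact S.zero_mem
    · rw [P.lie_h_pow_toEnd_f]; exact S.smul_mem _ (mem (by omega))

lemma finrank_eq [IsIrreducible K L M] (P : t.HasPrimitiveVectorWith m (n : K))
    (hspan : Submodule.span K {e, f, h} = ⊤) : Module.finrank K M = n + 1 := by
  let S : LieSubmodule K L M :=
    { Submodule.span K (Set.range fun i : Fin (n + 1) ↦ ψ (i : ℕ)) with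
      lie_mem := P.lie_mem_span_pow_toEnd_f hspan _ }
  have hS : S = ⊤ := (eq_bot_or_eq_top S).resolve_left fun hS ↦ P.ne_zero <| by
    simpa [hS] using (show m ∈ S from Submodule.subset_span ⟨0, by simp⟩)
  have hspanM : ⊤ ≤ Submodule.span K (Set.range fun i : Fin (n + 1) ↦ ψ (i : ℕ)) := fun v _ ↦
    (show v ∈ S from hS ▸ LieSubmodule.mem_top v)
  simpa using Module.finrank_eq_card_basis (Module.Basis.mk P.linearIndependent_pow_toEnd_f hspanM)

lemma lieSpan_overshears_eq_top [IsIrreducible K L M] (P : t.HasPrimitiveVectorWith m (n : K))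
    (hspan : Submodule.span K {e, f, h} = ⊤) (hn : n = 1 ∨ Even n) :
    LieSubmodule.lieSpan K L (overshears K L M) = ⊤ := by
  have hQ : overshears K L M ⊆ LieSubmodule.lieSpan K L (overshears K L M) :=
    LieSubmodule.subset_lieSpan
  suffices ∃ u ≠ 0, ∀ x ∈ ({e, f, h} : Set L),
      u ⊗ₜ[K] x ∈ LieSubmodule.lieSpan K L (overshears K L M) by
    obtain ⟨u, hu, hmem⟩ := this
    exact LieSubmodule.eq_top_of_tmul_mem _ hu (tmul_mem_of_span_eq_top hspan _ hmem)
  rcases hn with hn | ⟨_ | j, hn⟩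
  · exact ⟨m, P.ne_zero, P.tmul_mem_of_eq_one hQ hn⟩
  · exact ⟨m, P.ne_zero, P.tmul_mem_of_eq_zero hQ hn⟩
  · exact ⟨_, P.pow_toEnd_f_ne_zero_of_eq_nat rfl (by omega),
      P.tmul_mem_of_eq_two_mul_succ hQ (j := j) (by omega)⟩

end IsSl2Triple.HasPrimitiveVectorWith

/-- **Theorem (Tóth–Varolin).**  If `V` is a finite-dimensional irreducible module over
`sl(2,ℂ)` (here presented as a complex Lie algebra `L` with basis `E, F, H` satisfying the
standard commutation relations `[H,E] = 2E`, `[H,F] = -2F`, `[E,F] = H`) whose dimension is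
either `2` or odd, then the module `V ⊗ L` (with action `x·(v ⊗ y) = (x·v) ⊗ y + v ⊗ [x,y]`)
is generated by its overshears, i.e. the smallest Lie submodule containing all elements
`v ⊗ₜ x` with `x·(x·v) = 0` is everything. -/
theorem sl2_overshears_generate_of_dim_two_or_odd
    {L : Type} [LieRing L] [LieAlgebra ℂ L]
    (E F H : L) (b : Module.Basis (Fin 3) ℂ L) (hb : ⇑b = ![E, F, H])
    (hHE : ⁅H, E⁆ = (2 : ℂ) • E) (hHF : ⁅H, F⁆ = (-2 : ℂ) • F) (hEF : ⁅E, F⁆ = H)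
    {V : Type} [AddCommGroup V] [Module ℂ V] [LieRingModule L V] [LieModule ℂ L V]
    [FiniteDimensional ℂ V] [LieModule.IsIrreducible ℂ L V]
    (hdim : Module.finrank ℂ V = 2 ∨ Odd (Module.finrank ℂ V)) :
    LieSubmodule.lieSpan ℂ L
      {z : V ⊗[ℂ] L | ∃ (v : V) (x : L), z = v ⊗ₜ[ℂ] x ∧ ⁅x, ⁅x, v⁆⁆ = (0 : V)} = ⊤ := by
  have hspan : Submodule.span ℂ {E, F, H} = ⊤ := by
    rw [← b.span_eq, hb, Matrix.range_cons, Matrix.range_cons_cons_empty, Set.singleton_union]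
  have t : IsSl2Triple H E F :=
    { h_ne_zero := by simpa [hb] using b.ne_zero 2
      lie_e_f := hEF
      lie_h_e_nsmul := by rw [hHE, two_smul, two_nsmul]
      lie_h_f_nsmul := by rw [hHF, neg_smul, two_smul, two_nsmul] }
  have := nontrivial_of_isIrreducible ℂ L V
  obtain ⟨μ, m, -, P⟩ := t.exists_hasPrimitiveVectorWith (R := ℂ) (M := V)
  obtain ⟨n, rfl⟩ := P.exists_nat
  rw [P.finrank_eq hspan, Nat.odd_add_one, Nat.not_odd_iff_even] at hdim
  exact P.lieSpan_overshears_eq_top hspan (hdim.imp_left (by omega))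
end

section
/- Let 𝔤 be a finite-dimensional complex semisimple Lie algebra, 𝔥 a Cartan subalgebra of 𝔤, and W any 𝔤-module. Then the 𝔤-module W ⊗ 𝔤 is generated, as a Lie submodule, by the set of elements {w ⊗ h : w ∈ W, h ∈ 𝔥}; that is, the smallest Lie submodule of W ⊗ 𝔤 containing W ⊗ 𝔥 equals W ⊗ 𝔤. -/
open TensorProduct

/-- **Lemma (Tóth–Varolin).**  Let `𝔤` be a finite-dimensional complex semisimple Lie algebra,
`𝔥` a Cartan subalgebra of `𝔤`, and `W` any `𝔤`-module.  Then the `𝔤`-module `W ⊗ 𝔤`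
(with the action `x·(w ⊗ y) = (x·w) ⊗ y + w ⊗ [x,y]`, the second factor carrying the adjoint
action) is generated, as a Lie submodule, by the elements `w ⊗ h` with `w ∈ W`, `h ∈ 𝔥`. -/
theorem tensor_adjoint_generated_by_cartan_part
    {𝔤 : Type} [LieRing 𝔤] [LieAlgebra ℂ 𝔤] [FiniteDimensional ℂ 𝔤]
    [LieAlgebra.IsSemisimple ℂ 𝔤]
    (𝔥 : LieSubalgebra ℂ 𝔤) [𝔥.IsCartanSubalgebra]
    {W : Type} [AddCommGroup W] [Module ℂ W] [LieRingModule 𝔤 W] [LieModule ℂ 𝔤 W] :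
    LieSubmodule.lieSpan ℂ 𝔤
      {z : W ⊗[ℂ] 𝔤 | ∃ (w : W) (h : 𝔤), h ∈ 𝔥 ∧ z = w ⊗ₜ[ℂ] h} = ⊤ := by
  set N : LieSubmodule ℂ 𝔤 (W ⊗[ℂ] 𝔤) := LieSubmodule.lieSpan ℂ 𝔤
      {z : W ⊗[ℂ] 𝔤 | ∃ (w : W) (h : 𝔤), h ∈ 𝔥 ∧ z = w ⊗ₜ[ℂ] h} with hN
  -- The set of `y : 𝔤` such that `w ⊗ y ∈ N` for every `w` is a Lie ideal.
  set I : LieIdeal ℂ 𝔤 :=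
    { carrier := {y : 𝔤 | ∀ w : W, w ⊗ₜ[ℂ] y ∈ N}
      add_mem' := by
        intro y z hy hz w
        rw [TensorProduct.tmul_add]
        exact N.add_mem (hy w) (hz w)
      zero_mem' := by
        intro w
        rw [TensorProduct.tmul_zero]
        exact N.zero_mem
      smul_mem' := by
        intro c y hy w
        rw [TensorProduct.tmul_smul]
        exact N.smul_mem c (hy w)
      lie_mem := by
        intro x y hy w
        have h1 : ⁅x, w ⊗ₜ[ℂ] y⁆ = ⁅x, w⁆ ⊗ₜ[ℂ] y + w ⊗ₜ[ℂ] ⁅x, y⁆ :=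
          _root_.TensorProduct.LieModule.lie_tmul_right x w y
        have h2 : w ⊗ₜ[ℂ] ⁅x, y⁆ = ⁅x, w ⊗ₜ[ℂ] y⁆ - ⁅x, w⁆ ⊗ₜ[ℂ] y := by
          rw [h1]; abel
        rw [h2]
        exact N.sub_mem (N.lie_mem (hy w)) (hy ⁅x, w⁆) } with hI
  -- `𝔥 ⊆ I`.
  have h𝔥I : ∀ h ∈ 𝔥, h ∈ I := by
    intro h hh w
    exact LieSubmodule.subset_lieSpan ⟨w, h, hh, rfl⟩
  -- `Iᶜ = ⊥`, hence `I = ⊤`, by self-normalization of the Cartan subalgebra.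
  have hIc : Iᶜ = (⊥ : LieIdeal ℂ 𝔤) := by
    rw [eq_bot_iff]
    intro x hx
    have hdisj : I ⊓ Iᶜ = ⊥ := by simp
    -- `⁅h, x⁆ = 0` for all `h ∈ 𝔥`.
    have hcent : ∀ h ∈ 𝔥, ⁅x, h⁆ = (0 : 𝔤) := by
      intro h hh
      have m1 : ⁅x, h⁆ ∈ I := I.lie_mem (h𝔥I h hh)
      have m2 : ⁅x, h⁆ ∈ Iᶜ := by
        rw [← lie_skew]
        exact neg_mem ((Iᶜ : LieIdeal ℂ 𝔤).lie_mem hx)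
      have : ⁅x, h⁆ ∈ I ⊓ Iᶜ := ⟨m1, m2⟩
      rwa [hdisj, LieSubmodule.mem_bot] at this
    have hxnorm : x ∈ 𝔥.normalizer := by
      rw [LieSubalgebra.mem_normalizer_iff]
      intro y hy
      rw [hcent y hy]
      exact 𝔥.zero_mem
    rw [LieSubalgebra.IsCartanSubalgebra.self_normalizing] at hxnorm
    have hxI : x ∈ I := h𝔥I x hxnorm
    have : x ∈ I ⊓ Iᶜ := ⟨hxI, hx⟩
    rwa [hdisj, LieSubmodule.mem_bot] at this
  have hItop : I = ⊤ := by
    have := congrArg compl hIc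
    rwa [compl_compl, compl_bot] at this
  -- Conclude.
  rw [eq_top_iff]
  intro z _
  induction z using TensorProduct.induction_on with
  | zero => exact N.zero_mem
  | tmul w y =>
    have : y ∈ I := hItop ▸ LieSubmodule.mem_top y
    exact this w
  | add a b ha hb => exact N.add_mem (ha trivial) (hb trivial)
end

section
/- Let 𝔤_1 and 𝔤_2 be Lie algebras over ℂ, and for i = 1,2 let V_i be a 𝔤_i-module such that V_i ⊗ 𝔤_i is generated by its 𝔤_i-overshears. Regard V_1 ⊗ V_2 as a module over the direct sum Lie algebra 𝔤_1 ⊕ 𝔤_2 via (x_1 ⊕ x_2)·(v_1 ⊗ v_2) = (x_1·v_1) ⊗ v_2 + v_1 ⊗ (x_2·v_2). Then (V_1 ⊗ V_2) ⊗ (𝔤_1 ⊕ 𝔤_2) is generated by its (𝔤_1 ⊕ 𝔤_2)-overshears. -/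
open TensorProduct

section ProdLieAlgebra

variable {L₁ L₂ : Type} [LieRing L₁] [LieAlgebra ℂ L₁] [LieRing L₂] [LieAlgebra ℂ L₂]

/-- The direct sum `L₁ ⊕ L₂` of two Lie rings, with componentwise bracket. -/
instance prodLieRing : LieRing (L₁ × L₂) where
  bracket x y := (⁅x.1, y.1⁆, ⁅x.2, y.2⁆)
  add_lie x y z := by
    show (⁅x.1 + y.1, z.1⁆, ⁅x.2 + y.2, z.2⁆)
        = (⁅x.1, z.1⁆ + ⁅y.1, z.1⁆, ⁅x.2, z.2⁆ + ⁅y.2, z.2⁆)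
    rw [add_lie, add_lie]
  lie_add x y z := by
    show (⁅x.1, y.1 + z.1⁆, ⁅x.2, y.2 + z.2⁆)
        = (⁅x.1, y.1⁆ + ⁅x.1, z.1⁆, ⁅x.2, y.2⁆ + ⁅x.2, z.2⁆)
    rw [lie_add, lie_add]
  lie_self x := by
    show (⁅x.1, x.1⁆, ⁅x.2, x.2⁆) = (0, 0)
    rw [lie_self, lie_self]
  leibniz_lie x y z := by
    show (⁅x.1, ⁅y.1, z.1⁆⁆, ⁅x.2, ⁅y.2, z.2⁆⁆)
        = (⁅⁅x.1, y.1⁆, z.1⁆ + ⁅y.1, ⁅x.1, z.1⁆⁆, ⁅⁅x.2, y.2⁆, z.2⁆ + ⁅y.2, ⁅x.2, z.2⁆⁆)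
    rw [leibniz_lie x.1 y.1 z.1, leibniz_lie x.2 y.2 z.2]

/-- The direct sum `L₁ ⊕ L₂` of two Lie algebras over `ℂ`. -/
instance prodLieAlgebra : LieAlgebra ℂ (L₁ × L₂) where
  lie_smul c x y := by
    show (⁅x.1, (c • y).1⁆, ⁅x.2, (c • y).2⁆) = c • (⁅x.1, y.1⁆, ⁅x.2, y.2⁆)
    rw [Prod.smul_fst, Prod.smul_snd, lie_smul, lie_smul, Prod.smul_mk]

variable {V₁ : Type} [AddCommGroup V₁] [Module ℂ V₁] [LieRingModule L₁ V₁] [LieModule ℂ L₁ V₁]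

/-- A module over `L₁` is a module over `L₁ ⊕ L₂` via the first projection. -/
instance fstLieRingModule : LieRingModule (L₁ × L₂) V₁ where
  bracket x v := ⁅x.1, v⁆
  add_lie x y v := by
    show ⁅x.1 + y.1, v⁆ = ⁅x.1, v⁆ + ⁅y.1, v⁆
    rw [add_lie]
  lie_add x v w := by
    show ⁅x.1, v + w⁆ = ⁅x.1, v⁆ + ⁅x.1, w⁆
    rw [lie_add]
  leibniz_lie x y v := by
    show ⁅x.1, ⁅y.1, v⁆⁆ = ⁅⁅x.1, y.1⁆, v⁆ + ⁅y.1, ⁅x.1, v⁆⁆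
    rw [leibniz_lie x.1 y.1 v]

instance fstLieModule : LieModule ℂ (L₁ × L₂) V₁ where
  smul_lie c x v := by
    show ⁅(c • x).1, v⁆ = c • ⁅x.1, v⁆
    rw [Prod.smul_fst, smul_lie]
  lie_smul c x v := by
    show ⁅x.1, c • v⁆ = c • ⁅x.1, v⁆
    rw [lie_smul]

variable {V₂ : Type} [AddCommGroup V₂] [Module ℂ V₂] [LieRingModule L₂ V₂] [LieModule ℂ L₂ V₂]

/-- A module over `L₂` is a module over `L₁ ⊕ L₂` via the second projection. -/
instance sndLieRingModule : LieRingModule (L₁ × L₂) V₂ where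
  bracket x v := ⁅x.2, v⁆
  add_lie x y v := by
    show ⁅x.2 + y.2, v⁆ = ⁅x.2, v⁆ + ⁅y.2, v⁆
    rw [add_lie]
  lie_add x v w := by
    show ⁅x.2, v + w⁆ = ⁅x.2, v⁆ + ⁅x.2, w⁆
    rw [lie_add]
  leibniz_lie x y v := by
    show ⁅x.2, ⁅y.2, v⁆⁆ = ⁅⁅x.2, y.2⁆, v⁆ + ⁅y.2, ⁅x.2, v⁆⁆
    rw [leibniz_lie x.2 y.2 v]

instance sndLieModule : LieModule ℂ (L₁ × L₂) V₂ where
  smul_lie c x v := by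
    show ⁅(c • x).2, v⁆ = c • ⁅x.2, v⁆
    rw [Prod.smul_snd, smul_lie]
  lie_smul c x v := by
    show ⁅x.2, c • v⁆ = c • ⁅x.2, v⁆
    rw [lie_smul]

end ProdLieAlgebra

section Aux
set_option linter.unusedSectionVars false

variable {L₁ L₂ : Type} [LieRing L₁] [LieAlgebra ℂ L₁] [LieRing L₂] [LieAlgebra ℂ L₂]
variable {V₁ : Type} [AddCommGroup V₁] [Module ℂ V₁] [LieRingModule L₁ V₁] [LieModule ℂ L₁ V₁]
variable {V₂ : Type} [AddCommGroup V₂] [Module ℂ V₂] [LieRingModule L₂ V₂] [LieModule ℂ L₂ V₂]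

lemma prod_lie_def (x y : L₁ × L₂) : ⁅x, y⁆ = (⁅x.1, y.1⁆, ⁅x.2, y.2⁆) := rfl

lemma fst_lie (x : L₁ × L₂) (v : V₁) : ⁅x, v⁆ = ⁅x.1, v⁆ := rfl

lemma snd_lie (x : L₁ × L₂) (v : V₂) : ⁅x, v⁆ = ⁅x.2, v⁆ := rfl

end Aux

/-- **Lemma (Tóth–Varolin).**  Let `𝔤₁, 𝔤₂` be complex Lie algebras and `V₁, V₂` modules over
`𝔤₁` and `𝔤₂` respectively, such that each `Vᵢ ⊗ 𝔤ᵢ` is generated by its `𝔤ᵢ`-overshears.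
Regarding `V₁ ⊗ V₂` as a module over `𝔤₁ ⊕ 𝔤₂` via
`(x₁ ⊕ x₂)·(v₁ ⊗ v₂) = (x₁·v₁) ⊗ v₂ + v₁ ⊗ (x₂·v₂)`, the module
`(V₁ ⊗ V₂) ⊗ (𝔤₁ ⊕ 𝔤₂)` is generated by its `𝔤₁ ⊕ 𝔤₂`-overshears. -/
theorem overshears_generate_tensor_of_prod_lieAlgebra
    {L₁ L₂ : Type} [LieRing L₁] [LieAlgebra ℂ L₁] [LieRing L₂] [LieAlgebra ℂ L₂]
    {V₁ V₂ : Type} [AddCommGroup V₁] [Module ℂ V₁] [LieRingModule L₁ V₁] [LieModule ℂ L₁ V₁]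
    [AddCommGroup V₂] [Module ℂ V₂] [LieRingModule L₂ V₂] [LieModule ℂ L₂ V₂]
    (h₁ : LieSubmodule.lieSpan ℂ L₁
      {z : V₁ ⊗[ℂ] L₁ | ∃ (v : V₁) (x : L₁), z = v ⊗ₜ[ℂ] x ∧ ⁅x, ⁅x, v⁆⁆ = (0 : V₁)} = ⊤)
    (h₂ : LieSubmodule.lieSpan ℂ L₂
      {z : V₂ ⊗[ℂ] L₂ | ∃ (v : V₂) (x : L₂), z = v ⊗ₜ[ℂ] x ∧ ⁅x, ⁅x, v⁆⁆ = (0 : V₂)} = ⊤) :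
    LieSubmodule.lieSpan ℂ (L₁ × L₂)
      {z : (V₁ ⊗[ℂ] V₂) ⊗[ℂ] (L₁ × L₂) | ∃ (v : V₁ ⊗[ℂ] V₂) (x : L₁ × L₂),
        z = v ⊗ₜ[ℂ] x ∧ ⁅x, ⁅x, v⁆⁆ = (0 : V₁ ⊗[ℂ] V₂)} = ⊤ := by
  set S := LieSubmodule.lieSpan ℂ (L₁ × L₂)
      {z : (V₁ ⊗[ℂ] V₂) ⊗[ℂ] (L₁ × L₂) | ∃ (v : V₁ ⊗[ℂ] V₂) (x : L₁ × L₂),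
        z = v ⊗ₜ[ℂ] x ∧ ⁅x, ⁅x, v⁆⁆ = (0 : V₁ ⊗[ℂ] V₂)} with hSdef
  -- Step 1: pure tensors with Lie element supported in the first factor.
  have key₁ : ∀ (v₁ : V₁) (v₂ : V₂) (x : L₁),
      ((v₁ ⊗ₜ[ℂ] v₂) ⊗ₜ[ℂ] ((x, 0) : L₁ × L₂)) ∈ S := by
    intro v₁ v₂ x
    let Φ : V₁ ⊗[ℂ] L₁ →ₗ[ℂ] (V₁ ⊗[ℂ] V₂) ⊗[ℂ] (L₁ × L₂) :=
      TensorProduct.map ((TensorProduct.mk ℂ V₁ V₂).flip v₂) (LinearMap.inl ℂ L₁ L₂)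
    have hΦ : ∀ (v : V₁) (y : L₁), Φ (v ⊗ₜ[ℂ] y) = (v ⊗ₜ[ℂ] v₂) ⊗ₜ[ℂ] ((y, 0) : L₁ × L₂) := by
      intro v y; simp [Φ, TensorProduct.map_tmul]
    have hequiv : ∀ (x' : L₁) (p : V₁ ⊗[ℂ] L₁),
        Φ ⁅x', p⁆ = ⁅((x', 0) : L₁ × L₂), Φ p⁆ := by
      intro x' p
      induction p using TensorProduct.induction_on with
      | zero => simp
      | tmul v y =>
        rw [TensorProduct.LieModule.lie_tmul_right, map_add, hΦ, hΦ, hΦ,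
          TensorProduct.LieModule.lie_tmul_right, TensorProduct.LieModule.lie_tmul_right,
          fst_lie, snd_lie, prod_lie_def]
        simp [tmul_add, add_tmul]
      | add p q hp hq =>
        rw [lie_add, map_add, map_add, hp, hq, lie_add]
    let T : LieSubmodule ℂ L₁ (V₁ ⊗[ℂ] L₁) :=
      { Submodule.comap Φ S.toSubmodule with
        lie_mem := by
          intro x' p hp
          have hp' : Φ p ∈ S := hp
          show Φ ⁅x', p⁆ ∈ S
          rw [hequiv]
          exact S.lie_mem hp' }
    have hle : LieSubmodule.lieSpan ℂ L₁
        {z : V₁ ⊗[ℂ] L₁ | ∃ (v : V₁) (x : L₁), z = v ⊗ₜ[ℂ] x ∧ ⁅x, ⁅x, v⁆⁆ = (0 : V₁)} ≤ T := by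
      rw [LieSubmodule.lieSpan_le]
      rintro _ ⟨v, y, rfl, hvy⟩
      show Φ (v ⊗ₜ[ℂ] y) ∈ S
      rw [hΦ]
      apply LieSubmodule.subset_lieSpan
      refine ⟨v ⊗ₜ[ℂ] v₂, ((y, 0) : L₁ × L₂), rfl, ?_⟩
      rw [TensorProduct.LieModule.lie_tmul_right, lie_add,
        TensorProduct.LieModule.lie_tmul_right, TensorProduct.LieModule.lie_tmul_right,
        fst_lie, snd_lie, fst_lie, snd_lie]
      simp [hvy]
    have hmem : (v₁ ⊗ₜ[ℂ] x) ∈ T := by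
      apply hle
      rw [h₁]; trivial
    have : Φ (v₁ ⊗ₜ[ℂ] x) ∈ S := hmem
    rwa [hΦ] at this
  -- Step 2: pure tensors with Lie element supported in the second factor.
  have key₂ : ∀ (v₁ : V₁) (v₂ : V₂) (y : L₂),
      ((v₁ ⊗ₜ[ℂ] v₂) ⊗ₜ[ℂ] ((0, y) : L₁ × L₂)) ∈ S := by
    intro v₁ v₂ y
    let Φ : V₂ ⊗[ℂ] L₂ →ₗ[ℂ] (V₁ ⊗[ℂ] V₂) ⊗[ℂ] (L₁ × L₂) :=
      TensorProduct.map (TensorProduct.mk ℂ V₁ V₂ v₁) (LinearMap.inr ℂ L₁ L₂)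
    have hΦ : ∀ (v : V₂) (x : L₂), Φ (v ⊗ₜ[ℂ] x) = (v₁ ⊗ₜ[ℂ] v) ⊗ₜ[ℂ] ((0, x) : L₁ × L₂) := by
      intro v x; simp [Φ, TensorProduct.map_tmul]
    have hequiv : ∀ (y' : L₂) (p : V₂ ⊗[ℂ] L₂),
        Φ ⁅y', p⁆ = ⁅((0, y') : L₁ × L₂), Φ p⁆ := by
      intro y' p
      induction p using TensorProduct.induction_on with
      | zero => simp
      | tmul v x =>
        rw [TensorProduct.LieModule.lie_tmul_right, map_add, hΦ, hΦ, hΦ,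
          TensorProduct.LieModule.lie_tmul_right, TensorProduct.LieModule.lie_tmul_right,
          fst_lie, snd_lie, prod_lie_def]
        simp [tmul_add, add_tmul]
      | add p q hp hq =>
        rw [lie_add, map_add, map_add, hp, hq, lie_add]
    let T : LieSubmodule ℂ L₂ (V₂ ⊗[ℂ] L₂) :=
      { Submodule.comap Φ S.toSubmodule with
        lie_mem := by
          intro y' p hp
          have hp' : Φ p ∈ S := hp
          show Φ ⁅y', p⁆ ∈ S
          rw [hequiv]
          exact S.lie_mem hp' }
    have hle : LieSubmodule.lieSpan ℂ L₂
        {z : V₂ ⊗[ℂ] L₂ | ∃ (v : V₂) (x : L₂), z = v ⊗ₜ[ℂ] x ∧ ⁅x, ⁅x, v⁆⁆ = (0 : V₂)} ≤ T := by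
      rw [LieSubmodule.lieSpan_le]
      rintro _ ⟨v, x, rfl, hvx⟩
      show Φ (v ⊗ₜ[ℂ] x) ∈ S
      rw [hΦ]
      apply LieSubmodule.subset_lieSpan
      refine ⟨v₁ ⊗ₜ[ℂ] v, ((0, x) : L₁ × L₂), rfl, ?_⟩
      rw [TensorProduct.LieModule.lie_tmul_right, lie_add,
        TensorProduct.LieModule.lie_tmul_right, TensorProduct.LieModule.lie_tmul_right,
        fst_lie, snd_lie, fst_lie, snd_lie]
      simp [hvx]
    have hmem : (v₂ ⊗ₜ[ℂ] y) ∈ T := by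
      apply hle
      rw [h₂]; trivial
    have : Φ (v₂ ⊗ₜ[ℂ] y) ∈ S := hmem
    rwa [hΦ] at this
  -- Step 3: general pure tensors in the left factor.
  have key₁' : ∀ (w : V₁ ⊗[ℂ] V₂) (x : L₁), (w ⊗ₜ[ℂ] ((x, 0) : L₁ × L₂)) ∈ S := by
    intro w x
    induction w using TensorProduct.induction_on with
    | zero => rw [TensorProduct.zero_tmul]; exact S.zero_mem
    | tmul v₁ v₂ => exact key₁ v₁ v₂ x
    | add p q hp hq => rw [TensorProduct.add_tmul]; exact S.add_mem hp hq
  have key₂' : ∀ (w : V₁ ⊗[ℂ] V₂) (y : L₂), (w ⊗ₜ[ℂ] ((0, y) : L₁ × L₂)) ∈ S := by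
    intro w y
    induction w using TensorProduct.induction_on with
    | zero => rw [TensorProduct.zero_tmul]; exact S.zero_mem
    | tmul v₁ v₂ => exact key₂ v₁ v₂ y
    | add p q hp hq => rw [TensorProduct.add_tmul]; exact S.add_mem hp hq
  -- Step 4: conclude.
  rw [eq_top_iff]
  intro z _
  induction z using TensorProduct.induction_on with
  | zero => exact S.zero_mem
  | tmul w x =>
    have hx : x = ((x.1, 0) : L₁ × L₂) + ((0, x.2) : L₁ × L₂) := by
      ext <;> simp
    rw [hx, TensorProduct.tmul_add]
    exact S.add_mem (key₁' w x.1) (key₂' w x.2)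
  | add p q hp hq => exact S.add_mem (hp trivial) (hq trivial)
end

section
/- Let n ≥ 1, let J ∈ M_{2n}(ℂ) have n×n blocks [[0, −I],[I, 0]], and let λ ∈ M_{2n}(ℂ) be the block diagonal matrix [[I, 0],[0, −I]]. Then the conjugation orbit {g λ g^{−1} : g ∈ Sp(2n,ℂ)} equals the set of all A ∈ M_{2n}(ℂ) satisfying Aᵗ J + J A = 0 and A² = I; equivalently, it is the set of block matrices [[x, y],[z, −xᵗ]] with y and z symmetric n×n matrices, whose square is the identity. -/
/-!
If `A ∈ sp(2n)` and `A² = 1`, the `±1`-eigenspaces of `A` are complementary and isotropic for the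
symplectic form `ω(x, y) = xᵀ J y`, hence both Lagrangian. The form pairs them perfectly, so a
basis of the `+1`-eigenspace together with its `ω`-dual basis in the `-1`-eigenspace is a
symplectic basis in which `A` acts as `Λ`; its matrix `g` satisfies `gᵀ J g = J` and `A = g Λ g⁻¹`.
Conversely, `Λ ∈ sp(2n)` and `Λ² = 1`, and conjugation by `Sp(2n)` preserves both properties.
-/

open Matrix Module

namespace Module.End

variable {K V : Type*} [Field K] [AddCommGroup V] [Module K V]

theorem isCompl_eigenspace_one_eigenspace_neg_one [NeZero (2 : K)] {f : End K V}
    (hf : f * f = 1) : IsCompl (f.eigenspace 1) (f.eigenspace (-1)) := by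
  have hff (x : V) : f (f x) = x := congr($hf x)
  refine ⟨Submodule.disjoint_def.mpr fun x h₁ h₂ ↦ ?_, codisjoint_iff.mpr ?_⟩
  · rw [mem_eigenspace_iff, one_smul] at h₁
    rw [mem_eigenspace_iff, h₁, neg_one_smul, eq_neg_iff_add_eq_zero, ← two_smul K] at h₂
    exact (smul_eq_zero.mp h₂).resolve_left two_ne_zero
  · refine Submodule.eq_top_iff'.mpr fun x ↦ Submodule.mem_sup.mpr
      ⟨(2⁻¹ : K) • (x + f x), ?_, (2⁻¹ : K) • (x - f x), ?_, ?_⟩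
    · simp [hff, add_comm]
    · simp [hff, ← smul_neg]
    · rw [← smul_add, add_add_sub_cancel, ← two_smul K, smul_smul, inv_mul_cancel₀ two_ne_zero,
        one_smul]

theorem eigenspace_le_orthogonal_eigenspace {B : LinearMap.BilinForm K V} {f : End K V}
    (hf : LinearMap.IsAdjointPair B B f (-f)) {μ ν : K} (hμν : μ + ν ≠ 0) :
    f.eigenspace μ ≤ B.orthogonal (f.eigenspace ν) := by
  intro x hx
  rw [LinearMap.BilinForm.mem_orthogonal_iff]
  intro y hy
  rw [mem_eigenspace_iff] at hx hy
  have h := hf y x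
  simp only [Pi.neg_apply, hy, hx, map_neg, map_smul, LinearMap.smul_apply, smul_eq_mul] at h
  have : (μ + ν) * B y x = 0 := by linear_combination h
  exact (mul_eq_zero.mp this).resolve_left hμν

end Module.End

namespace LinearMap.BilinForm

variable {K V : Type*} [Field K] [AddCommGroup V] [Module K V] {B : LinearMap.BilinForm K V}
  {L M : Submodule K V}

theorem two_mul_finrank_le_of_le_orthogonal [FiniteDimensional K V] (hB : B.Nondegenerate)
    (hL : L ≤ B.orthogonal L) : 2 * finrank K L ≤ finrank K V := by
  have := Submodule.finrank_mono hL
  rw [finrank_orthogonal hB] at this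
  omega

theorem two_mul_finrank_eq_of_isCompl [FiniteDimensional K V] (hB : B.Nondegenerate)
    (hLM : IsCompl L M) (hL : L ≤ B.orthogonal L) (hM : M ≤ B.orthogonal M) :
    2 * finrank K L = finrank K V := by
  have := Submodule.finrank_add_eq_of_isCompl hLM
  have := two_mul_finrank_le_of_le_orthogonal hB hL
  have := two_mul_finrank_le_of_le_orthogonal hB hM
  omega

theorem isPerfPair_compl₁₂_subtype [FiniteDimensional K V] (hB : B.Nondegenerate)
    (hLM : Codisjoint L M) (hL : L ≤ B.orthogonal L) (hM : M ≤ B.orthogonal M) :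
    (B.compl₁₂ L.subtype M.subtype).IsPerfPair := by
  refine .of_injective (injective_iff_map_eq_zero _ |>.mpr fun x hx ↦ ?_)
    (injective_iff_map_eq_zero _ |>.mpr fun y hy ↦ ?_)
  · have : B x = 0 := ext_on_codisjoint hLM (fun l hl ↦ hL hl x x.2)
      (fun m hm ↦ congr($hx ⟨m, hm⟩))
    exact Subtype.ext <| hB.1 x fun v ↦ congr($this v)
  · have : B.flip y = 0 := ext_on_codisjoint hLM (fun l hl ↦ congr($hy ⟨l, hl⟩))
      (fun m hm ↦ hM y.2 m hm)
    exact Subtype.ext <| hB.2 y fun v ↦ congr($this v)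

theorem exists_basis_apply_eq_ite [FiniteDimensional K V] (hB : B.Nondegenerate)
    (hLM : Codisjoint L M) (hL : L ≤ B.orthogonal L) (hM : M ≤ B.orthogonal M)
    {ι : Type*} [Finite ι] [DecidableEq ι] (e : Basis ι K M) :
    ∃ f : Basis ι K L, ∀ i j, B (f i) (e j) = if i = j then 1 else 0 := by
  have := isPerfPair_compl₁₂_subtype hB hLM hL hM
  set p := B.compl₁₂ L.subtype M.subtype
  refine ⟨e.dualBasis.map p.toPerfPair.symm, fun i j ↦ ?_⟩
  calc B (e.dualBasis.map p.toPerfPair.symm i) (e j)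
      = p (p.toPerfPair.symm (e.dualBasis i)) (e j) := rfl
    _ = if i = j then 1 else 0 := by
      rw [p.apply_symm_toPerfPair_self, e.dualBasis_apply_self]
      exact if_congr eq_comm rfl rfl

theorem exists_basis_toMatrix_eq_J [FiniteDimensional K V] (hB : B.Nondegenerate)
    (hB' : B.IsAlt) (hLM : IsCompl L M) (hL : L ≤ B.orthogonal L) (hM : M ≤ B.orthogonal M)
    {ι : Type*} [Fintype ι] [DecidableEq ι] (e : Basis ι K L) :
    ∃ b : Basis (ι ⊕ ι) K V, (∀ i, b (.inl i) = e i) ∧ (∀ i, b (.inr i) ∈ M) ∧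
      toMatrix b B = J ι K := by
  obtain ⟨f, hfe⟩ := exists_basis_apply_eq_ite hB hLM.symm.codisjoint hM hL e
  refine ⟨(e.prod f).map (L.prodEquivOfIsCompl M hLM), fun i ↦ by simp, fun i ↦ by simp, ?_⟩
  ext (i | i) (j | j)
  · simpa [J] using hL (e j).2 _ (e i).2
  · simp [J, ← LinearMap.IsAlt.neg hB' (f j), hfe, one_apply, eq_comm]
  · simp [J, hfe, one_apply]
  · simpa [J] using hM (f j).2 _ (f i).2

theorem exists_basis_toMatrix_eq_J_toMatrix_eq_fromBlocks [FiniteDimensional K V]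
    [NeZero (2 : K)] (hB : B.Nondegenerate) (hB' : B.IsAlt) {f : End K V}
    (hf : IsAdjointPair B B f (-f)) (hff : f * f = 1) {ι : Type*} [Fintype ι] [DecidableEq ι]
    (hV : finrank K V = Fintype.card ι + Fintype.card ι) :
    ∃ b : Basis (ι ⊕ ι) K V,
      toMatrix b B = J ι K ∧ LinearMap.toMatrix b b f = fromBlocks 1 0 0 (-1) := by
  have h2 : (1 : K) + 1 ≠ 0 := by rw [one_add_one_eq_two]; exact two_ne_zero
  have hLM := End.isCompl_eigenspace_one_eigenspace_neg_one hff
  have hL := End.eigenspace_le_orthogonal_eigenspace hf h2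
  have hM := End.eigenspace_le_orthogonal_eigenspace hf (μ := -1) (ν := -1)
    (by rwa [← neg_add, neg_ne_zero])
  have hdim : finrank K (f.eigenspace 1) = Fintype.card ι := by
    have := two_mul_finrank_eq_of_isCompl hB hLM hL hM
    omega
  set e := (finBasisOfFinrankEq K _ hdim).reindex (Fintype.equivFin ι).symm
  obtain ⟨b, hbL, hbM, hbB⟩ := exists_basis_toMatrix_eq_J hB hB' hLM hL hM e
  refine ⟨b, hbB, ?_⟩
  have hfL (i : ι) : f (b (.inl i)) = b (.inl i) := by
    simpa [hbL] using End.mem_eigenspace_iff.mp (e i).2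
  have hfM (i : ι) : f (b (.inr i)) = -b (.inr i) := by
    simpa using End.mem_eigenspace_iff.mp (hbM i)
  ext (i | i) (j | j) <;>
    simp [LinearMap.toMatrix_apply, hfL, hfM, one_apply, Finsupp.single_apply, eq_comm]

end LinearMap.BilinForm

namespace Matrix

variable {l R : Type*} [Fintype l] [DecidableEq l] [CommRing R]

theorem isSkewAdjoint_iff {n : Type*} [Fintype n] {J A : Matrix n n R} :
    J.IsSkewAdjoint A ↔ Aᵀ * J + J * A = 0 := by
  rw [Matrix.IsSkewAdjoint, IsAdjointPair, mul_neg, ← add_eq_zero_iff_eq_neg]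

theorem IsSkewAdjoint.conj {n : Type*} [Fintype n] [DecidableEq n] {J A g : Matrix n n R}
    (hA : J.IsSkewAdjoint A) (hg : gᵀ * J * g = J) (hu : IsUnit g) :
    J.IsSkewAdjoint (g * A * g⁻¹) := by
  rw [← hg] at hA
  simpa [Matrix.IsSkewAdjoint, mul_neg, neg_mul, hg] using
    (isAdjointPair_equiv J A (-A) g hu).mp hA

theorem IsSkewAdjoint.isAdjointPair_toLin' {n : Type*} [Fintype n] [DecidableEq n]
    {J A : Matrix n n R} (hA : J.IsSkewAdjoint A) :
    LinearMap.IsAdjointPair (toBilin' J) (toBilin' J) (toLin' A) (-toLin' A) := by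
  rw [← LinearMap.coe_neg, ← map_neg]
  exact (isAdjointPair_toLinearMap₂' J J A (-A)).mpr hA

theorem isAlt_toBilin'_J : (toBilin' (J l R)).IsAlt := by
  intro x
  simp [toBilin'_apply', J, dotProduct, Fintype.sum_sum_type, fromBlocks_mulVec, neg_mulVec,
    mul_comm]

theorem isSkewAdjoint_J_fromBlocks_one_neg_one :
    (J l R).IsSkewAdjoint (fromBlocks 1 0 0 (-1)) := by
  rw [isSkewAdjoint_iff]
  simp [J, fromBlocks_transpose, fromBlocks_multiply, fromBlocks_add]

theorem transpose_mul_J_add_J_mul_eq_zero_iff {A : Matrix (l ⊕ l) (l ⊕ l) R} :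
    Aᵀ * J l R + J l R * A = 0 ↔
      ∃ x y z : Matrix l l R, yᵀ = y ∧ zᵀ = z ∧ A = fromBlocks x y z (-xᵀ) := by
  obtain ⟨a, b, c, d, rfl⟩ : ∃ a b c d, A = fromBlocks a b c d :=
    ⟨_, _, _, _, (fromBlocks_toBlocks A).symm⟩
  simp only [J, fromBlocks_transpose, fromBlocks_multiply, fromBlocks_add, ← fromBlocks_zero,
    fromBlocks_inj, mul_zero, mul_one, zero_add, mul_neg, add_zero, zero_mul, neg_mul, one_mul,
    exists_and_left, existsAndEq, true_and]
  constructor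
  · rintro ⟨hc, hd, -, hb⟩
    exact ⟨neg_add_eq_zero.mp hb, add_neg_eq_zero.mp hc, by rw [neg_add_eq_zero.mp hd, neg_neg]⟩
  · rintro ⟨hb, hc, rfl⟩
    simp [hb, hc]

theorem exists_symplectic_conj_fromBlocks_iff {K : Type*} [Field K] [NeZero (2 : K)]
    {A : Matrix (l ⊕ l) (l ⊕ l) K} :
    (∃ g, gᵀ * J l K * g = J l K ∧ A = g * fromBlocks 1 0 0 (-1) * g⁻¹) ↔
      Aᵀ * J l K + J l K * A = 0 ∧ A * A = 1 := by
  constructor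
  · rintro ⟨g, hg, rfl⟩
    have hu : IsUnit g.det := SymplecticGroup.symplectic_det (SymplecticGroup.mem_iff'.mpr hg)
    refine ⟨isSkewAdjoint_iff.mp (isSkewAdjoint_J_fromBlocks_one_neg_one.conj hg
      ((isUnit_iff_isUnit_det g).mpr hu)), ?_⟩
    calc g * fromBlocks 1 0 0 (-1) * g⁻¹ * (g * fromBlocks 1 0 0 (-1) * g⁻¹)
        = g * (fromBlocks 1 0 0 (-1) * fromBlocks 1 0 0 (-1)) * g⁻¹ := by
          simp only [Matrix.mul_assoc, nonsing_inv_mul_cancel_left _ _ hu]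
      _ = 1 := by simp [fromBlocks_multiply, mul_nonsing_inv _ hu]
  · rintro ⟨hskew, hinv⟩
    obtain ⟨b, hbJ, hbA⟩ := LinearMap.BilinForm.exists_basis_toMatrix_eq_J_toMatrix_eq_fromBlocks
      (LinearMap.BilinForm.nondegenerate_toBilin'_of_det_ne_zero' _ (isUnit_det_J l K).ne_zero)
      isAlt_toBilin'_J (isSkewAdjoint_iff.mpr hskew).isAdjointPair_toLin'
      (by rw [Module.End.mul_eq_comp, ← toLin'_mul, hinv, toLin'_one, Module.End.one_eq_id])
      (ι := l) (by simp)
    set g := (Pi.basisFun K (l ⊕ l)).toMatrix b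
    have hgJ : gᵀ * J l K * g = J l K := by
      have := LinearMap.BilinForm.toMatrix_mul_basis_toMatrix (Pi.basisFun K (l ⊕ l)) b
        (toBilin' (J l K))
      rwa [LinearMap.BilinForm.toMatrix_basisFun, LinearMap.BilinForm.toMatrix'_toBilin', hbJ]
        at this
    have hAg : A * g = g * fromBlocks 1 0 0 (-1) := by
      rw [← hbA, basis_toMatrix_mul_linearMap_toMatrix,
        ← linearMap_toMatrix_mul_basis_toMatrix _ (Pi.basisFun K (l ⊕ l)),
        LinearMap.toMatrix_eq_toMatrix', LinearMap.toMatrix'_toLin']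
    have hg : IsUnit g.det := isUnit_det_of_left_inverse (b.toMatrix_mul_toMatrix_flip _)
    exact ⟨g, hgJ, by rw [← hAg, mul_nonsing_inv_cancel_right _ _ hg]⟩

end Matrix

theorem symplectic_orbit_of_lambda_general (n : ℕ)
    (J : Matrix (Fin n ⊕ Fin n) (Fin n ⊕ Fin n) ℂ)
    (hJ : J = Matrix.fromBlocks 0 (-1) 1 0)
    (Λ : Matrix (Fin n ⊕ Fin n) (Fin n ⊕ Fin n) ℂ)
    (hΛ : Λ = Matrix.fromBlocks 1 0 0 (-1)) :
    ({A | ∃ g : Matrix (Fin n ⊕ Fin n) (Fin n ⊕ Fin n) ℂ,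
        gᵀ * J * g = J ∧ A = g * Λ * g⁻¹}
      = {A | Aᵀ * J + J * A = 0 ∧ A * A = 1}) ∧
    ({A | ∃ g : Matrix (Fin n ⊕ Fin n) (Fin n ⊕ Fin n) ℂ,
        gᵀ * J * g = J ∧ A = g * Λ * g⁻¹}
      = {A | (∃ x y z : Matrix (Fin n) (Fin n) ℂ,
          yᵀ = y ∧ zᵀ = z ∧ A = Matrix.fromBlocks x y z (-xᵀ)) ∧ A * A = 1}) := by
  obtain rfl : J = Matrix.J (Fin n) ℂ := hJ
  subst hΛ
  exact ⟨Set.ext fun _ ↦ exists_symplectic_conj_fromBlocks_iff,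
    Set.ext fun _ ↦ exists_symplectic_conj_fromBlocks_iff.trans
      (and_congr_left' transpose_mul_J_add_J_mul_eq_zero_iff)⟩

/-- **The symplectic orbit of `Λ = diag(I,−I)`.**  The conjugation orbit
`{g Λ g⁻¹ : g ∈ Sp(2n,ℂ)}` equals the set of matrices `A ∈ M_{2n}(ℂ)` with
`Aᵀ J + J A = 0` and `A² = I`; equivalently it is the set of block matrices
`[[x,y],[z,−xᵀ]]` with `y`, `z` symmetric, whose square is the identity. -/
theorem symplectic_orbit_of_lambda (n : ℕ) (hn : 1 ≤ n)
    (J : Matrix (Fin n ⊕ Fin n) (Fin n ⊕ Fin n) ℂ)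
    (hJ : J = Matrix.fromBlocks 0 (-1) 1 0)
    (Λ : Matrix (Fin n ⊕ Fin n) (Fin n ⊕ Fin n) ℂ)
    (hΛ : Λ = Matrix.fromBlocks 1 0 0 (-1)) :
    ({A | ∃ g : Matrix (Fin n ⊕ Fin n) (Fin n ⊕ Fin n) ℂ,
        gᵀ * J * g = J ∧ A = g * Λ * g⁻¹}
      = {A | Aᵀ * J + J * A = 0 ∧ A * A = 1}) ∧
    ({A | ∃ g : Matrix (Fin n ⊕ Fin n) (Fin n ⊕ Fin n) ℂ,
        gᵀ * J * g = J ∧ A = g * Λ * g⁻¹}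
      = {A | (∃ x y z : Matrix (Fin n) (Fin n) ℂ,
          yᵀ = y ∧ zᵀ = z ∧ A = Matrix.fromBlocks x y z (-xᵀ)) ∧ A * A = 1}) :=
  symplectic_orbit_of_lambda_general n J hJ Λ hΛ
end
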